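/- (Proposition 1, linear-mixing part.) Let H : (n,f,t) ∈ {1..N_an}×{1..N_sc}×{1..N_sym} → (Ω → ℂ) and W : (n,k,l) ∈ {1..N_an}×{1..K_de}×{1..K_do} → (Ω → ℂ) be square-integrable complex random variables such that the combined family of all entries of H and W is mutually independent. Write Ĥ, Ŵ for the entrywise means and Var H[n,f,t], Var W[n,k,l] for the entrywise variances E|·−mean|². Fix Δf̄ > 0 and ΔT̄ > 0, and for τ ∈ ℝ^{K_de}, ν ∈ ℝ^{K_do} define the steering matrices B(τ) ∈ ℂ^{N_sc×K_de} with [B(τ)]_{f,k} = exp(−2πi (f−1) Δf̄ τ_k) and C(ν) ∈ ℂ^{N_sym×K_do} with [C(ν)]_{t,l} = exp(2πi (t−1) ΔT̄ ν_l). Then for all τ, ν: E‖ H − W ×₂ B(τ) ×₃ C(ν) ‖_F² = ‖ Ĥ − Ŵ ×₂ B(τ) ×₃ C(ν) ‖_F² + Σ_{n,f,t} Var H[n,f,t] + N_sc·N_sym·Σ_{n,k,l} Var W[n,k,l]. In particular, the difference between the expected and the plug-in residual energies is a constant independent of (τ, ν), so maximizing the expected log-likelihood over (τ, ν) is equivalent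 to minimizing ‖ Ĥ − Ŵ ×₂ B(τ) ×₃ C(ν) ‖_F². -/

import Mathlib

open MeasureTheory ProbabilityTheory Finset Real
open scoped MeasureTheory

/-- Delay-domain steering matrix `[B(τ)]_{f,k} = exp(−2πi (f−1) Δf̄ τ_k)`
(with `f` zero-indexed here, so `(f : ℕ)` plays the role of `f − 1`). -/
noncomputable def steerB {Nsc Kde : ℕ} (Δf : ℝ) (τ : Fin Kde → ℝ) :
    Matrix (Fin Nsc) (Fin Kde) ℂ :=
  Matrix.of fun f k =>
    Complex.exp (-(2 * (π : ℂ) * Complex.I * (f : ℕ) * (Δf : ℂ) * (τ k : ℂ)))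

/-- Doppler-domain steering matrix `[C(ν)]_{t,l} = exp(2πi (t−1) ΔT̄ ν_l)`. -/
noncomputable def steerC {Nsym Kdo : ℕ} (ΔT : ℝ) (ν : Fin Kdo → ℝ) :
    Matrix (Fin Nsym) (Fin Kdo) ℂ :=
  Matrix.of fun t l =>
    Complex.exp (2 * (π : ℂ) * Complex.I * (t : ℕ) * (ΔT : ℂ) * (ν l : ℂ))

open scoped InnerProductSpace

/-!
Each entry of the residual `H[n,f,t] - ∑ₖ ∑ₗ B[f,k] C[t,l] W[n,k,l]` is a sum of pairwise
independent square-integrable random variables. In a real Hilbert space the second moment of such a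
sum is the squared norm of its mean plus the sum of the variances of the terms, because independent
centred terms are orthogonal in `L²`. The steering coefficients have modulus one, so every
`W[n,k,l]` contributes its own variance once for each pair `(f,t)`, which gives the factor
`N_sc N_sym`.
-/

namespace ProbabilityTheory

section HilbertSpace

variable {Ω E : Type*} {mΩ : MeasurableSpace Ω} {μ : Measure Ω}
  [NormedAddCommGroup E] [InnerProductSpace ℝ E]

theorem integrable_inner_of_memLp {X Y : Ω → E} (hX : MemLp X 2 μ) (hY : MemLp Y 2 μ) :
    Integrable (fun ω ↦ ⟪X ω, Y ω⟫_ℝ) μ :=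
  (L2.integrable_inner (𝕜 := ℝ) (hX.toLp X) (hY.toLp Y)).congr <| by
    filter_upwards [hX.coeFn_toLp, hY.coeFn_toLp] with ω hXω hYω
    rw [hXω, hYω]

variable [CompleteSpace E] [IsProbabilityMeasure μ]

theorem integral_sub_integral {X : Ω → E} (hX : Integrable X μ) :
    ∫ ω, (X ω - ∫ ω', X ω' ∂μ) ∂μ = 0 := by
  rw [integral_sub hX (integrable_const _), integral_const, probReal_univ, one_smul, sub_self]

theorem integral_norm_sq_eq_norm_integral_sq_add {Y : Ω → E} (hY : MemLp Y 2 μ) :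
    ∫ ω, ‖Y ω‖ ^ 2 ∂μ = ‖∫ ω, Y ω ∂μ‖ ^ 2 + ∫ ω, ‖Y ω - ∫ ω', Y ω' ∂μ‖ ^ 2 ∂μ := by
  set m := ∫ ω, Y ω ∂μ
  have hY₀ : MemLp (fun ω ↦ Y ω - m) 2 μ := hY.sub (memLp_const m)
  have hY₀int : Integrable (fun ω ↦ Y ω - m) μ := hY₀.integrable one_le_two
  have hsq : Integrable (fun ω ↦ ‖Y ω - m‖ ^ 2) μ := hY₀.integrable_norm_pow two_ne_zero
  have hcross : ∫ ω, ⟪m, Y ω - m⟫_ℝ ∂μ = 0 := by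
    rw [integral_inner hY₀int, integral_sub_integral (hY.integrable one_le_two), inner_zero_right]
  calc ∫ ω, ‖Y ω‖ ^ 2 ∂μ = ∫ ω, (‖m‖ ^ 2 + 2 * ⟪m, Y ω - m⟫_ℝ + ‖Y ω - m‖ ^ 2) ∂μ := by
        simp_rw [← norm_add_sq_real, add_sub_cancel]
    _ = ‖m‖ ^ 2 + ∫ ω, ‖Y ω - m‖ ^ 2 ∂μ := by
        have hcross_int : Integrable (fun ω ↦ 2 * ⟪m, Y ω - m⟫_ℝ) μ :=
          (hY₀int.const_inner m).const_mul 2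
        have hlin : Integrable (fun ω ↦ ‖m‖ ^ 2 + 2 * ⟪m, Y ω - m⟫_ℝ) μ :=
          (integrable_const _).add hcross_int
        rw [integral_add hlin hsq, integral_add (integrable_const _) hcross_int,
          integral_const_mul, hcross, integral_const, probReal_univ, one_smul, mul_zero, add_zero]

variable [MeasurableSpace E] [BorelSpace E]

theorem integral_norm_sum_sq_of_centered {ι : Type*} [Fintype ι] {Z : ι → Ω → E}
    (hZ : ∀ i, MemLp (Z i) 2 μ) (hZ₀ : ∀ i, ∫ ω, Z i ω ∂μ = 0)
    (hind : Pairwise fun i j ↦ IndepFun (Z i) (Z j) μ) :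
    ∫ ω, ‖∑ i, Z i ω‖ ^ 2 ∂μ = ∑ i, ∫ ω, ‖Z i ω‖ ^ 2 ∂μ := by
  have hint : ∀ i j, Integrable (fun ω ↦ ⟪Z i ω, Z j ω⟫_ℝ) μ := fun i j ↦
    integrable_inner_of_memLp (hZ i) (hZ j)
  have horth : ∀ i j, i ≠ j → ∫ ω, ⟪Z i ω, Z j ω⟫_ℝ ∂μ = 0 := fun i j hij ↦
    ((hind hij).integral_bilin ((hZ i).integrable one_le_two)
      ((hZ j).integrable one_le_two) (innerSL ℝ)).trans (by simp [hZ₀])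
  calc ∫ ω, ‖∑ i, Z i ω‖ ^ 2 ∂μ = ∫ ω, ∑ i, ∑ j, ⟪Z i ω, Z j ω⟫_ℝ ∂μ := by
        simp_rw [← real_inner_self_eq_norm_sq, sum_inner, inner_sum]
    _ = ∑ i, ∑ j, ∫ ω, ⟪Z i ω, Z j ω⟫_ℝ ∂μ := by
        rw [integral_finsetSum _ fun i _ ↦ integrable_finsetSum _ fun j _ ↦ hint i j]
        exact Finset.sum_congr rfl fun i _ ↦ integral_finsetSum _ fun j _ ↦ hint i j
    _ = ∑ i, ∫ ω, ‖Z i ω‖ ^ 2 ∂μ := by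
        refine Finset.sum_congr rfl fun i _ ↦ ?_
        rw [Finset.sum_eq_single_of_mem i (mem_univ i) fun j _ hji ↦ horth i j hji.symm]
        simp_rw [real_inner_self_eq_norm_sq]

theorem integral_norm_sum_sq {ι : Type*} [Fintype ι] {X : ι → Ω → E}
    (hX : ∀ i, MemLp (X i) 2 μ) (hind : Pairwise fun i j ↦ IndepFun (X i) (X j) μ) :
    ∫ ω, ‖∑ i, X i ω‖ ^ 2 ∂μ = ‖∑ i, ∫ ω, X i ω ∂μ‖ ^ 2
      + ∑ i, ∫ ω, ‖X i ω - ∫ ω', X i ω' ∂μ‖ ^ 2 ∂μ := by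
  have hXint : ∀ i, Integrable (X i) μ := fun i ↦ (hX i).integrable one_le_two
  have hmean : ∫ ω, ∑ i, X i ω ∂μ = ∑ i, ∫ ω, X i ω ∂μ :=
    integral_finsetSum _ fun i _ ↦ hXint i
  have hcentered : ∀ ω, ∑ i, X i ω - ∑ i, ∫ ω', X i ω' ∂μ = ∑ i, (X i ω - ∫ ω', X i ω' ∂μ) :=
    fun ω ↦ (Finset.sum_sub_distrib _ _).symm
  have hsum : MemLp (fun ω ↦ ∑ i, X i ω) 2 μ := memLp_finsetSum _ fun i _ ↦ hX i
  rw [integral_norm_sq_eq_norm_integral_sq_add hsum, hmean]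
  simp only [hcentered]
  rw [integral_norm_sum_sq_of_centered (Z := fun i ω ↦ X i ω - ∫ ω', X i ω' ∂μ)
    (fun i ↦ (hX i).sub (memLp_const _)) (fun i ↦ integral_sub_integral (hXint i))
    (fun i j hij ↦ (hind hij).comp (measurable_sub_const _) (measurable_sub_const _))]

theorem integral_norm_sub_sum_mul_sq {κ : Type*} [Fintype κ] {X : Ω → ℂ} {V : κ → Ω → ℂ}
    {c : κ → ℂ} (hX : MemLp X 2 μ) (hV : ∀ p, MemLp (V p) 2 μ) (hc : ∀ p, ‖c p‖ = 1)
    (hXV : ∀ p, IndepFun X (V p) μ) (hVV : Pairwise fun p q ↦ IndepFun (V p) (V q) μ) :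
    ∫ ω, ‖X ω - ∑ p, c p * V p ω‖ ^ 2 ∂μ
      = ‖(∫ ω, X ω ∂μ) - ∑ p, c p * ∫ ω, V p ω ∂μ‖ ^ 2
        + ∫ ω, ‖X ω - ∫ ω', X ω' ∂μ‖ ^ 2 ∂μ
        + ∑ p, ∫ ω, ‖V p ω - ∫ ω', V p ω' ∂μ‖ ^ 2 ∂μ := by
  let Z : Option κ → Ω → ℂ := fun o ω ↦ o.elim (X ω) fun p ↦ -c p * V p ω
  have hZ : ∀ o, MemLp (Z o) 2 μ := by
    rintro (_ | p)
    exacts [hX, (hV p).const_mul _]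
  have hZind : Pairwise fun o o' ↦ IndepFun (Z o) (Z o') μ := by
    rintro (_ | p) (_ | q) hne
    · exact absurd rfl hne
    · exact (hXV q).comp measurable_id (measurable_const_mul _)
    · exact (hXV p).symm.comp (measurable_const_mul _) measurable_id
    · exact (hVV fun hpq ↦ hne (congrArg some hpq)).comp
        (measurable_const_mul _) (measurable_const_mul _)
  have hmean : ∀ p, ∫ ω, -c p * V p ω ∂μ = -c p * ∫ ω, V p ω ∂μ := fun p ↦
    integral_const_mul _ _
  have hvar : ∀ p, ∫ ω, ‖-c p * V p ω - ∫ ω', -c p * V p ω' ∂μ‖ ^ 2 ∂μ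
      = ∫ ω, ‖V p ω - ∫ ω', V p ω' ∂μ‖ ^ 2 ∂μ := fun p ↦ by
    simp_rw [hmean, ← mul_sub, norm_mul, norm_neg, hc, one_mul]
  have h := integral_norm_sum_sq hZ hZind
  simp only [Fintype.sum_option, Z, Option.elim_none, Option.elim_some, hvar] at h
  simp only [hmean] at h
  simp only [neg_mul, sum_neg_distrib, ← sub_eq_add_neg] at h
  rw [h, add_assoc]

end HilbertSpace

section ModeProduct

variable {Ω : Type*} [MeasureSpace Ω] {Nan Nsc Nsym Kde Kdo : ℕ}
  {H : Fin Nan × Fin Nsc × Fin Nsym → Ω → ℂ} {W : Fin Nan × Fin Kde × Fin Kdo → Ω → ℂ}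
  {B : Matrix (Fin Nsc) (Fin Kde) ℂ} {C : Matrix (Fin Nsym) (Fin Kdo) ℂ}

theorem integrable_norm_sub_modeProduct_sq (hH : ∀ i, MemLp (H i) 2 ℙ)
    (hW : ∀ j, MemLp (W j) 2 ℙ) (n : Fin Nan) (f : Fin Nsc) (t : Fin Nsym) :
    Integrable (fun ω ↦ ‖H (n, f, t) ω - ∑ k, ∑ l, B f k * C t l * W (n, k, l) ω‖ ^ 2) ℙ :=
  ((hH _).sub <| memLp_finsetSum _ fun _ _ ↦ memLp_finsetSum _ fun _ _ ↦
    (hW _).const_mul _).integrable_norm_pow two_ne_zero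

variable [IsProbabilityMeasure (ℙ : Measure Ω)]

theorem integral_norm_sub_modeProduct_sq (hH : ∀ i, MemLp (H i) 2 ℙ)
    (hW : ∀ j, MemLp (W j) 2 ℙ) (hind : iIndepFun (Sum.elim H W) ℙ)
    (hB : ∀ f k, ‖B f k‖ = 1) (hC : ∀ t l, ‖C t l‖ = 1)
    (n : Fin Nan) (f : Fin Nsc) (t : Fin Nsym) :
    ∫ ω, ‖H (n, f, t) ω - ∑ k, ∑ l, B f k * C t l * W (n, k, l) ω‖ ^ 2 ∂ℙ
      = ‖(∫ ω, H (n, f, t) ω ∂ℙ) - ∑ k, ∑ l, B f k * C t l * ∫ ω, W (n, k, l) ω ∂ℙ‖ ^ 2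
        + ∫ ω, ‖H (n, f, t) ω - ∫ ω', H (n, f, t) ω' ∂ℙ‖ ^ 2 ∂ℙ
        + ∑ k, ∑ l, ∫ ω, ‖W (n, k, l) ω - ∫ ω', W (n, k, l) ω' ∂ℙ‖ ^ 2 ∂ℙ := by
  simpa only [Fintype.sum_prod_type] using
    integral_norm_sub_sum_mul_sq (V := fun p : Fin Kde × Fin Kdo ↦ W (n, p.1, p.2))
      (c := fun p ↦ B f p.1 * C t p.2) (hH _) (fun _ ↦ hW _)
      (fun p ↦ by rw [norm_mul, hB, hC, one_mul])
      (fun _ ↦ hind.indepFun Sum.inl_ne_inr)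
      (fun p q hpq ↦ hind.indepFun (i := .inr (n, p.1, p.2)) (j := .inr (n, q.1, q.2))
        (by simpa [Prod.ext_iff] using hpq))

theorem integral_sum_norm_sub_modeProduct_sq (hH : ∀ i, MemLp (H i) 2 ℙ)
    (hW : ∀ j, MemLp (W j) 2 ℙ) (hind : iIndepFun (Sum.elim H W) ℙ)
    (hB : ∀ f k, ‖B f k‖ = 1) (hC : ∀ t l, ‖C t l‖ = 1) :
    ∫ ω, ∑ n, ∑ f, ∑ t, ‖H (n, f, t) ω - ∑ k, ∑ l, B f k * C t l * W (n, k, l) ω‖ ^ 2 ∂ℙ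
      = ∑ n, ∑ f, ∑ t,
          ‖(∫ ω, H (n, f, t) ω ∂ℙ) - ∑ k, ∑ l, B f k * C t l * ∫ ω, W (n, k, l) ω ∂ℙ‖ ^ 2
        + ∑ n, ∑ f, ∑ t, ∫ ω, ‖H (n, f, t) ω - ∫ ω', H (n, f, t) ω' ∂ℙ‖ ^ 2 ∂ℙ
        + Nsc * Nsym * ∑ n, ∑ k, ∑ l, ∫ ω, ‖W (n, k, l) ω - ∫ ω', W (n, k, l) ω' ∂ℙ‖ ^ 2 ∂ℙ := by
  have hint := integrable_norm_sub_modeProduct_sq (B := B) (C := C) hH hW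
  rw [integral_finsetSum _ fun n _ ↦ integrable_finsetSum _ fun f _ ↦
    integrable_finsetSum _ fun t _ ↦ hint n f t]
  simp_rw [integral_finsetSum _ fun _ _ ↦ integrable_finsetSum _ fun _ _ ↦ hint _ _ _,
    integral_finsetSum _ fun _ _ ↦ hint _ _ _, integral_norm_sub_modeProduct_sq hH hW hind hB hC,
    sum_add_distrib, sum_const, card_univ, Fintype.card_fin, nsmul_eq_mul, mul_sum, mul_assoc]

end ModeProduct

end ProbabilityTheory

theorem norm_steerB_apply {Nsc Kde : ℕ} (Δf : ℝ) (τ : Fin Kde → ℝ) (f : Fin Nsc) (k : Fin Kde) :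
    ‖steerB (Nsc := Nsc) Δf τ f k‖ = 1 := by
  simp [steerB, Complex.norm_exp]

theorem norm_steerC_apply {Nsym Kdo : ℕ} (ΔT : ℝ) (ν : Fin Kdo → ℝ) (t : Fin Nsym) (l : Fin Kdo) :
    ‖steerC (Nsym := Nsym) ΔT ν t l‖ = 1 := by
  simp [steerC, Complex.norm_exp]

theorem expected_residual_energy_linear_mixing_general
    {Ω : Type*} [MeasureSpace Ω] [IsProbabilityMeasure (ℙ : Measure Ω)]
    {Nan Nsc Nsym Kde Kdo : ℕ}
    (H : Fin Nan × Fin Nsc × Fin Nsym → Ω → ℂ)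
    (W : Fin Nan × Fin Kde × Fin Kdo → Ω → ℂ)
    (hH : ∀ i, MemLp (H i) 2 ℙ) (hW : ∀ j, MemLp (W j) 2 ℙ)
    (hind : iIndepFun (Sum.elim H W) ℙ)
    (Δf ΔT : ℝ) :
    ∀ (τ : Fin Kde → ℝ) (ν : Fin Kdo → ℝ),
      (∫ ω, ∑ n, ∑ f, ∑ t,
          ‖H (n, f, t) ω
            - ∑ k, ∑ l, steerB (Nsc := Nsc) Δf τ f k * steerC (Nsym := Nsym) ΔT ν t l
                * W (n, k, l) ω‖ ^ 2 ∂ℙ)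
        = (∑ n, ∑ f, ∑ t,
            ‖(∫ ω, H (n, f, t) ω ∂ℙ)
              - ∑ k, ∑ l, steerB (Nsc := Nsc) Δf τ f k * steerC (Nsym := Nsym) ΔT ν t l
                  * (∫ ω, W (n, k, l) ω ∂ℙ)‖ ^ 2)
          + (∑ n, ∑ f, ∑ t, ∫ ω, ‖H (n, f, t) ω - ∫ ω', H (n, f, t) ω' ∂ℙ‖ ^ 2 ∂ℙ)
          + (Nsc : ℝ) * (Nsym : ℝ)
            * ∑ n, ∑ k, ∑ l, ∫ ω, ‖W (n, k, l) ω - ∫ ω', W (n, k, l) ω' ∂ℙ‖ ^ 2 ∂ℙ :=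
  fun τ ν ↦ integral_sum_norm_sub_modeProduct_sq hH hW hind
    (norm_steerB_apply Δf τ) (norm_steerC_apply ΔT ν)

/-- Proposition 1, linear-mixing part: for mutually independent square-integrable
random tensors `H` and `W`,
`E‖H − W ×₂ B(τ) ×₃ C(ν)‖_F² = ‖Ĥ − Ŵ ×₂ B(τ) ×₃ C(ν)‖_F²
  + Σ Var H + N_sc N_sym Σ Var W`
for all `τ, ν`; the difference between the expected and plug-in residual energies is
a constant independent of `(τ, ν)`. -/
theorem expected_residual_energy_linear_mixing
    {Ω : Type*} [MeasureSpace Ω] [IsProbabilityMeasure (ℙ : Measure Ω)]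
    {Nan Nsc Nsym Kde Kdo : ℕ}
    (H : Fin Nan × Fin Nsc × Fin Nsym → Ω → ℂ)
    (W : Fin Nan × Fin Kde × Fin Kdo → Ω → ℂ)
    (hH : ∀ i, MemLp (H i) 2 ℙ) (hW : ∀ j, MemLp (W j) 2 ℙ)
    (hind : iIndepFun (Sum.elim H W) ℙ)
    (Δf ΔT : ℝ) (hΔf : 0 < Δf) (hΔT : 0 < ΔT) :
    ∀ (τ : Fin Kde → ℝ) (ν : Fin Kdo → ℝ),
      (∫ ω, ∑ n, ∑ f, ∑ t,
          ‖H (n, f, t) ω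
            - ∑ k, ∑ l, steerB (Nsc := Nsc) Δf τ f k * steerC (Nsym := Nsym) ΔT ν t l
                * W (n, k, l) ω‖ ^ 2 ∂ℙ)
        = (∑ n, ∑ f, ∑ t,
            ‖(∫ ω, H (n, f, t) ω ∂ℙ)
              - ∑ k, ∑ l, steerB (Nsc := Nsc) Δf τ f k * steerC (Nsym := Nsym) ΔT ν t l
                  * (∫ ω, W (n, k, l) ω ∂ℙ)‖ ^ 2)
          + (∑ n, ∑ f, ∑ t, ∫ ω, ‖H (n, f, t) ω - ∫ ω', H (n, f, t) ω' ∂ℙ‖ ^ 2 ∂ℙ)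
          + (Nsc : ℝ) * (Nsym : ℝ)
            * ∑ n, ∑ k, ∑ l, ∫ ω, ‖W (n, k, l) ω - ∫ ω', W (n, k, l) ω' ∂ℙ‖ ^ 2 ∂ℙ :=
  expected_residual_energy_linear_mixing_general H W hH hW hind Δf ΔT
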